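/- arXiv:2411.16386 — 11 statements merged into one kernel-verified Lean document; each statement's English description precedes it below -/
import Mathlib

section
/- Every infinitary clone τ-algebra C is isomorphic to a functional infinitary clone τ-algebra on value domain C↓: the map φ : C → O^(ω)_{C↓} given by φ(a)(s) = q(a, s) for s ∈ C^ω is an injective homomorphism of infinitary clone τ-algebras from C into the full functional infinitary clone τ-algebra O^(ω)_{C↓}. -/
/-! ### τ-algebras (homogeneous type: every symbol of arity ω) -/

/-- `α` is a homomorphism of τ-algebras from `(A, FA)` to `(B, FB)`. -/
def IsAlgHom {τ A B : Type} (FA : τ → (ℕ → A) → A) (FB : τ → (ℕ → B) → B)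
    (α : A → B) : Prop :=
  ∀ f s, α (FA f s) = FB f (fun i => α (s i))

/-! ### Infinitary clone τ-algebras -/

/-- The data of an infinitary clone τ-algebra on carrier `C`. -/
structure CloneData (τ C : Type) where
  e : ℕ → C
  F : τ → C
  q : C → (ℕ → C) → C

/-- Axioms (N1)–(N3) of infinitary clone τ-algebras. -/
def IsCloneAlg {τ C : Type} (d : CloneData τ C) : Prop :=
  (∀ (i : ℕ) (s : ℕ → C), d.q (d.e i) s = s i) ∧
  (∀ x : C, d.q x d.e = x) ∧
  (∀ (x : C) (y z : ℕ → C), d.q (d.q x y) z = d.q x (fun i => d.q (y i) z))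

/-- Homomorphisms of infinitary clone τ-algebras. -/
def IsCloneHom {τ C D : Type} (dC : CloneData τ C) (dD : CloneData τ D)
    (α : C → D) : Prop :=
  (∀ i, α (dC.e i) = dD.e i) ∧
  (∀ f, α (dC.F f) = dD.F f) ∧
  (∀ x s, α (dC.q x s) = dD.q (α x) (fun i => α (s i)))

/-- Subuniverses of an infinitary clone τ-algebra. -/
def IsCloneSubuniv {τ C : Type} (d : CloneData τ C) (S : Set C) : Prop :=
  (∀ i, d.e i ∈ S) ∧ (∀ f, d.F f ∈ S) ∧
  (∀ (a : C) (s : ℕ → C), a ∈ S → (∀ i, s i ∈ S) → d.q a s ∈ S)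

/-- The full functional infinitary clone τ-algebra `O^(ω)_A` on the value domain `(A, FA)`. -/
def fullCloneData {τ : Type} (A : Type) (FA : τ → (ℕ → A) → A) :
    CloneData τ ((ℕ → A) → A) where
  e i := fun s => s i
  F f := FA f
  q g h := fun s => g (fun i => h i s)

/-- The τ-algebra `C↓` associated with an infinitary clone τ-algebra. -/
def downOp {τ C : Type} (d : CloneData τ C) : τ → (ℕ → C) → C :=
  fun f s => d.q (d.F f) s

/-- The clone structure induced on a subuniverse. -/
def subCloneData {τ C : Type} (d : CloneData τ C) {S : Set C}
    (h : IsCloneSubuniv d S) : CloneData τ S where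
  e i := ⟨d.e i, h.1 i⟩
  F f := ⟨d.F f, h.2.1 f⟩
  q a s := ⟨d.q a.1 (fun i => (s i).1), h.2.2 _ _ a.2 (fun i => (s i).2)⟩

/-! ### Terms -/

/-- τ-terms over the variables `e 0, e 1, …`. -/
inductive Term (τ : Type) : Type
  | e : ℕ → Term τ
  | app : τ → (ℕ → Term τ) → Term τ

/-- Term operation of a τ-term on the τ-algebra `(A, FA)`. -/
def Term.eval {τ A : Type} (FA : τ → (ℕ → A) → A) : Term τ → (ℕ → A) → A
  | .e i, s => s i
  | .app f t, s => FA f (fun i => (t i).eval FA s)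

/-- Simultaneous substitution of terms for variables. -/
def Term.subst {τ : Type} : Term τ → (ℕ → Term τ) → Term τ
  | .e i, u => u i
  | .app f t, u => .app f (fun i => (t i).subst u)

theorem Term.eval_subst {τ A : Type} (FA : τ → (ℕ → A) → A) :
    ∀ (t : Term τ) (u : ℕ → Term τ) (s : ℕ → A),
      (t.subst u).eval FA s = t.eval FA (fun i => (u i).eval FA s)
  | .e _, _, _ => rfl
  | .app f t, u, s => by
      simp only [Term.subst, Term.eval]
      congr 1
      funext i
      exact Term.eval_subst FA (t i) u s

/-- The initial infinitary clone τ-algebra `N_τ̄` on the set of τ-terms. -/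
def initData (τ : Type) : CloneData τ (Term τ) where
  e := Term.e
  F f := Term.app f Term.e
  q := Term.subst

/-- The term infinitary clone τ-algebra `A↑` (as a clone structure on the set
of term operations of `A`). -/
def upData {τ A : Type} (FA : τ → (ℕ → A) → A) :
    CloneData τ {g : (ℕ → A) → A // ∃ t : Term τ, g = Term.eval FA t} where
  e i := ⟨fun s => s i, ⟨Term.e i, rfl⟩⟩
  F f := ⟨FA f, ⟨Term.app f Term.e, by funext s; rfl⟩⟩
  q g h := ⟨fun s => g.1 (fun i => (h i).1 s), by
    obtain ⟨t, ht⟩ := g.2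
    refine ⟨t.subst (fun i => (h i).2.choose), ?_⟩
    funext s
    rw [Term.eval_subst, ← ht]
    exact congrArg _ (funext fun i => by rw [← (h i).2.choose_spec])⟩

/-! ### Bundled algebras, varieties -/

/-- A bundled τ-algebra. -/
structure Alg (τ : Type) : Type 1 where
  carrier : Type
  op : τ → (ℕ → carrier) → carrier

/-- Subuniverses of a τ-algebra. -/
def IsSubuniv {τ : Type} (A : Alg τ) (S : Set A.carrier) : Prop :=
  ∀ f s, (∀ i, s i ∈ S) → A.op f s ∈ S

/-- The subalgebra on a subuniverse. -/
def subAlg {τ : Type} (A : Alg τ) (S : Set A.carrier) (h : IsSubuniv A S) : Alg τ :=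
  ⟨S, fun f s => ⟨A.op f (fun i => (s i).1), h f _ (fun i => (s i).2)⟩⟩

/-- Product of τ-algebras, with componentwise operations. -/
def prodAlg {τ I : Type} (A : I → Alg τ) : Alg τ :=
  ⟨∀ i, (A i).carrier, fun f s i => (A i).op f (fun n => s n i)⟩

/-- Power of a τ-algebra. -/
def powAlg {τ : Type} (A : Alg τ) (I : Type) : Alg τ := prodAlg (fun _ : I => A)

/-- A variety: a class of τ-algebras closed under homomorphic images,
subalgebras (together with isomorphic copies), and arbitrary products. -/
def IsVariety {τ : Type} (K : Alg τ → Prop) : Prop :=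
  (∀ A B : Alg τ, K A →
    (∃ α : A.carrier → B.carrier, Function.Surjective α ∧ IsAlgHom A.op B.op α) → K B) ∧
  (∀ A B : Alg τ, K A →
    (∃ α : B.carrier → A.carrier, Function.Injective α ∧ IsAlgHom B.op A.op α) → K B) ∧
  (∀ (I : Type) (A : I → Alg τ), (∀ i, K (A i)) → K (prodAlg A))

/-- The subuniverse generated by a subset. -/
def gen {τ : Type} (A : Alg τ) (X : Set A.carrier) : Set A.carrier :=
  ⋂₀ {S | IsSubuniv A S ∧ X ⊆ S}

theorem gen_subuniv {τ : Type} (A : Alg τ) (X : Set A.carrier) :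
    IsSubuniv A (gen A X) := by
  intro f s hs
  rw [gen, Set.mem_sInter]
  intro S hS
  exact hS.1 f s (fun i => Set.mem_sInter.1 (hs i) S hS)

/-- The subalgebra generated by a subset. -/
def genSubalg {τ : Type} (A : Alg τ) (X : Set A.carrier) : Alg τ :=
  subAlg A (gen A X) (gen_subuniv A X)

/-! ### Bundled infinitary clone algebras -/

/-- A bundled infinitary clone τ-algebra. -/
structure CAlg (τ : Type) : Type 1 where
  carrier : Type
  data : CloneData τ carrier
  isClone : IsCloneAlg data

/-- Componentwise product of clone data. -/
def prodCloneData {τ I : Type} {C : I → Type} (d : ∀ i, CloneData τ (C i)) :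
    CloneData τ (∀ i, C i) where
  e n := fun i => (d i).e n
  F f := fun i => (d i).F f
  q a s := fun i => (d i).q (a i) (fun n => s n i)

theorem prodCloneData_isClone {τ I : Type} {C : I → Type} (d : ∀ i, CloneData τ (C i))
    (h : ∀ i, IsCloneAlg (d i)) : IsCloneAlg (prodCloneData d) := by
  refine ⟨?_, ?_, ?_⟩
  · intro n s; funext i; exact (h i).1 n (fun m => s m i)
  · intro x; funext i; exact (h i).2.1 (x i)
  · intro x y z; funext i; exact (h i).2.2 (x i) (fun n => y n i) (fun n => z n i)

/-- Product of infinitary clone τ-algebras. -/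
def prodCAlg {τ I : Type} (Cs : I → CAlg τ) : CAlg τ :=
  ⟨∀ i, (Cs i).carrier, prodCloneData (fun i => (Cs i).data),
    prodCloneData_isClone _ (fun i => (Cs i).isClone)⟩

/-- A variety of infinitary clone τ-algebras. -/
def IsCloneVariety {τ : Type} (H : CAlg τ → Prop) : Prop :=
  (∀ C D : CAlg τ, H C →
    (∃ α : C.carrier → D.carrier, Function.Surjective α ∧ IsCloneHom C.data D.data α) → H D) ∧
  (∀ C D : CAlg τ, H C →
    (∃ α : D.carrier → C.carrier, Function.Injective α ∧ IsCloneHom D.data C.data α) → H D) ∧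
  (∀ (I : Type) (Cs : I → CAlg τ), (∀ i, H (Cs i)) → H (prodCAlg Cs))

/-! ### The operators △ and ▽ -/

/-- `K△`: clone algebras isomorphic to a subalgebra of `O^(ω)_A` for some `A ∈ K`. -/
def Tri {τ : Type} (K : Alg τ → Prop) (D : CAlg τ) : Prop :=
  ∃ A : Alg τ, K A ∧ ∃ α : D.carrier → ((ℕ → A.carrier) → A.carrier),
    Function.Injective α ∧ IsCloneHom D.data (fullCloneData A.carrier A.op) α

/-- `H▽`: τ-algebras isomorphic to some `A` having a functional infinitary clone
τ-algebra on value domain `A` belonging to `H`. -/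
def Nabla {τ : Type} (H : CAlg τ → Prop) (B : Alg τ) : Prop :=
  ∃ A : Alg τ,
    (∃ α : B.carrier → A.carrier, Function.Bijective α ∧ IsAlgHom B.op A.op α) ∧
    ∃ D : CAlg τ, H D ∧ ∃ β : D.carrier → ((ℕ → A.carrier) → A.carrier),
      Function.Injective β ∧ IsCloneHom D.data (fullCloneData A.carrier A.op) β

/-! ### Equational theories -/

/-- The equational theory of a class of τ-algebras. -/
def ThK {τ : Type} (K : Alg τ → Prop) : Set (Term τ × Term τ) :=
  {p | ∀ A : Alg τ, K A → Term.eval A.op p.1 = Term.eval A.op p.2}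

/-- The class of models of a set of identities. -/
def ModClass {τ : Type} (Sg : Set (Term τ × Term τ)) : Alg τ → Prop :=
  fun A => ∀ p ∈ Sg, Term.eval A.op p.1 = Term.eval A.op p.2

/-! ### HSP -/

/-- `B` is a homomorphic image of a subalgebra of a power of `A`. -/
def InHSP {τ : Type} (A B : Alg τ) : Prop :=
  ∃ (I : Type) (S : Set (powAlg A I).carrier) (h : IsSubuniv (powAlg A I) S)
    (α : (subAlg (powAlg A I) S h).carrier → B.carrier),
    Function.Surjective α ∧ IsAlgHom (subAlg (powAlg A I) S h).op B.op α

/-- `B` is a homomorphic image of a subalgebra of a finite power of `A`. -/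
def InHSPFin {τ : Type} (A B : Alg τ) : Prop :=
  ∃ (n : ℕ) (S : Set (powAlg A (Fin n)).carrier) (h : IsSubuniv (powAlg A (Fin n)) S)
    (α : (subAlg (powAlg A (Fin n)) S h).carrier → B.carrier),
    Function.Surjective α ∧ IsAlgHom (subAlg (powAlg A (Fin n)) S h).op B.op α

/-! ### Finite dimensionality -/

/-- An ω-ary operation has finite dimension. -/
def FinDimOp {A : Type} (g : (ℕ → A) → A) : Prop :=
  ∃ n : ℕ, ∀ s u : ℕ → A, (∀ i < n, s i = u i) → g s = g u

/-- A τ-algebra is finite-dimensional if all its term operations have finite dimension. -/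
def FinDimAlg {τ : Type} (A : Alg τ) : Prop :=
  ∀ t : Term τ, FinDimOp (Term.eval A.op t)

/-! ### Statement 0 -/

theorem stmt0 (τ C : Type) (d : CloneData τ C) (hC : IsCloneAlg d) :
    Function.Injective (fun a : C => d.q a) ∧
    IsCloneHom d (fullCloneData C (downOp d)) (fun a : C => d.q a) := by
  obtain ⟨h1, h2, h3⟩ := hC
  refine ⟨fun a b hab => ?_, fun i => ?_, fun f => rfl, fun x s => ?_⟩
  · have := congrFun hab d.e
    simpa [h2] using this
  · funext s; exact h1 i s
  · funext z; exact h3 x s z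
end

section
/- Let C be an infinitary clone τ-algebra and a ∈ C. (1) For every n ≥ 1, a has dimension at most n if and only if q(a, e_0, …, e_{n−1}, e_0, e_0, e_0, …) = a (the sequence lists e_0, …, e_{n−1} followed by the constant value e_0). (2) a has dimension 0 if and only if q(a, e_0, e_2, e_4, e_6, …) = q(a, e_1, e_3, e_5, e_7, …). -/
/-! ### Statement 3 -/

theorem stmt3 (τ C : Type) (d : CloneData τ C) (hC : IsCloneAlg d) (a : C) :
    (∀ n : ℕ, 1 ≤ n →
      ((∀ s u : ℕ → C, (∀ i < n, s i = u i) → d.q a s = d.q a u) ↔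
        d.q a (fun i => if i < n then d.e i else d.e 0) = a)) ∧
    ((∀ s u : ℕ → C, d.q a s = d.q a u) ↔
      d.q a (fun i => d.e (2 * i)) = d.q a (fun i => d.e (2 * i + 1))) := by
  obtain ⟨h1, h2, h3⟩ := hC
  constructor
  · intro n hn
    constructor
    · intro h
      have := h (fun i => if i < n then d.e i else d.e 0) d.e
        (fun i hi => by simp [hi])
      rw [this, h2]
    · intro h s u hsu
      have key : ∀ v : ℕ → C, d.q a v =
          d.q a (fun i => if i < n then v i else v 0) := by
        intro v
        conv_lhs => rw [← h, h3]
        congr 1; funext i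
        by_cases hi : i < n <;> simp [hi, h1]
      rw [key s, key u]
      congr 1; funext i
      by_cases hi : i < n
      · simp [hi, hsu i hi]
      · simp [hi, hsu 0 hn]
  · constructor
    · intro h
      exact h _ _
    · intro h s u
      set z : ℕ → C := fun k => if k % 2 = 0 then s (k / 2) else u (k / 2) with hz
      have hze : ∀ i, z (2 * i) = s i := by
        intro i; simp [hz, Nat.mul_div_cancel_left]
      have hzo : ∀ i, z (2 * i + 1) = u i := by
        intro i
        have h2i : (2 * i + 1) % 2 = 1 := by omega
        have h2d : (2 * i + 1) / 2 = i := by omega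
        simp [hz, h2i, h2d]
      have e1 : d.q (d.q a (fun i => d.e (2 * i))) z = d.q a s := by
        rw [h3]
        congr 1; funext i; rw [h1, hze]
      have e2 : d.q (d.q a (fun i => d.e (2 * i + 1))) z = d.q a u := by
        rw [h3]
        congr 1; funext i; rw [h1, hzo]
      rw [← e1, ← e2, h]
end

section
/- Let X be a set of symbols disjoint from τ, and let N_τ̄(X) be the set of metaterms built from the symbols e_i (i ∈ ω) and the ω-ary symbols in τ ∪ X. Equip N_τ̄(X) with e_i^N = e_i, f^N = f(e_0, e_1, …) for f ∈ τ, and q^N defined by recursion on the first argument: q^N(e_i, t_0, t_1, …) = t_i and q^N(w(t_0, t_1, …), u) = w(q^N(t_0, u), q^N(t_1, u), …) for w ∈ τ ∪ X. Then: (a) N_τ̄(X) is an infinitary clone τ-algebra (it satisfies (N1)–(N3)); (b) it is free over the set {ẋ : x ∈ X}, where ẋ := x(e_0, e_1, …): for every infinitary clone τ-algebra C and every function α : {ẋ : x ∈ X} → C there is a unique homomorphism of infinitary clone τ-algebras N_τ̄(X) → C extending α. In particular, for X = ∅, N_τ̄ := N_τ̄(∅) is an initial object: for every infinitary clone τ-algebra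 C there is a unique homomorphism N_τ̄ → C. -/
/-! ### Statement 4 -/

def metaData (τ X : Type) : CloneData τ (Term (τ ⊕ X)) where
  e := Term.e
  F f := Term.app (Sum.inl f) Term.e
  q := Term.subst

/-- The generator `ẋ = x(e_0, e_1, …)`. -/
def dotGen {τ X : Type} (x : X) : Term (τ ⊕ X) := Term.app (Sum.inr x) Term.e

theorem Term.subst_e {τ : Type} : ∀ t : Term τ, t.subst Term.e = t
  | .e _ => rfl
  | .app f t => by
      simp only [Term.subst]
      exact congrArg _ (funext fun i => Term.subst_e (t i))

theorem Term.subst_assoc {τ : Type} :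
    ∀ (t : Term τ) (u v : ℕ → Term τ),
      (t.subst u).subst v = t.subst (fun i => (u i).subst v)
  | .e _, _, _ => rfl
  | .app f t, u, v => by
      simp only [Term.subst]
      exact congrArg _ (funext fun i => Term.subst_assoc (t i) u v)

/-- The canonical extension of `α : X → C` to metaterms. -/
def extHom {τ X C : Type} (d : CloneData τ C) (α : X → C) : Term (τ ⊕ X) → C
  | .e i => d.e i
  | .app (Sum.inl f) t => d.q (d.F f) (fun i => extHom d α (t i))
  | .app (Sum.inr x) t => d.q (α x) (fun i => extHom d α (t i))

theorem extHom_subst {τ X C : Type} (d : CloneData τ C) (hd : IsCloneAlg d)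
    (α : X → C) : ∀ (t : Term (τ ⊕ X)) (u : ℕ → Term (τ ⊕ X)),
      extHom d α (t.subst u) = d.q (extHom d α t) (fun i => extHom d α (u i))
  | .e i, u => by
      simp only [Term.subst, extHom]
      exact (hd.1 i (fun j => extHom d α (u j))).symm
  | .app (Sum.inl f) t, u => by
      simp only [Term.subst, extHom]
      rw [hd.2.2]
      exact congrArg _ (funext fun i => extHom_subst d hd α (t i) u)
  | .app (Sum.inr x) t, u => by
      simp only [Term.subst, extHom]
      rw [hd.2.2]
      exact congrArg _ (funext fun i => extHom_subst d hd α (t i) u)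

theorem freeHom {τ X : Type} (C : Type) (d : CloneData τ C) (hd : IsCloneAlg d)
    (α : X → C) :
    ∃! h : Term (τ ⊕ X) → C,
      IsCloneHom (metaData τ X) d h ∧ ∀ x : X, h (dotGen x) = α x := by
  refine ⟨extHom d α, ⟨⟨fun i => rfl, fun f => ?_, extHom_subst d hd α⟩, fun x => ?_⟩, ?_⟩
  · show d.q (d.F f) (fun i => d.e i) = d.F f
    exact hd.2.1 _
  · show d.q (α x) (fun i => d.e i) = α x
    exact hd.2.1 _
  · rintro h ⟨⟨he, hF, hq⟩, hα⟩
    funext t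
    induction t with
    | e i => exact he i
    | app w t ih =>
      have hthis : Term.app w t = (metaData τ X).q (Term.app w Term.e) t := by
        show _ = Term.subst _ _
        simp only [Term.subst]
      have key : h (Term.app w t) = d.q (h (Term.app w Term.e)) fun i => h (t i) := by
        conv_lhs => rw [hthis]
        exact hq _ t
      cases w with
      | inl f =>
        rw [key]
        show d.q (h ((metaData τ X).F f)) _ = d.q (d.F f) fun i => extHom d α (t i)
        rw [hF f]
        exact congrArg _ (funext fun i => ih i)
      | inr x =>
        rw [key]
        show d.q (h (dotGen x)) _ = d.q (α x) fun i => extHom d α (t i)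
        rw [hα x]
        exact congrArg _ (funext fun i => ih i)

theorem stmt4 (τ X : Type) :
    (∀ (i : ℕ) (u : ℕ → Term (τ ⊕ X)), (metaData τ X).q (Term.e i) u = u i) ∧
    (∀ (w : τ ⊕ X) (t u : ℕ → Term (τ ⊕ X)),
      (metaData τ X).q (Term.app w t) u =
        Term.app w (fun i => (metaData τ X).q (t i) u)) ∧
    IsCloneAlg (metaData τ X) ∧
    (∀ (C : Type) (d : CloneData τ C), IsCloneAlg d → ∀ α : X → C,
      ∃! h : Term (τ ⊕ X) → C,
        IsCloneHom (metaData τ X) d h ∧ ∀ x : X, h (dotGen x) = α x) ∧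
    (∀ (C : Type) (d : CloneData τ C), IsCloneAlg d →
      ∃! h : Term (τ ⊕ Empty) → C, IsCloneHom (metaData τ Empty) d h) := by
  refine ⟨fun i u => rfl, fun w t u => rfl,
    ⟨fun i s => rfl, Term.subst_e, Term.subst_assoc⟩,
    fun C d hd α => freeHom C d hd α, ?_⟩
  intro C d hd
  obtain ⟨h, ⟨hh, _⟩, huniq⟩ := freeHom C d hd (fun x : Empty => x.elim)
  exact ⟨h, hh, fun h' hh' => huniq h' ⟨hh', fun x => x.elim⟩⟩
end

section
/- The τ-algebra N_τ̄↓ is the absolutely free τ-algebra over the generating set {e_0, e_1, e_2, …}: for every τ-algebra A and every function α : {e_0, e_1, …} → A there exists a unique homomorphism of τ-algebras N_τ̄↓ → A extending α. -/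
/-! ### Statement 5 -/

theorem stmt5 (τ A : Type) (FA : τ → (ℕ → A) → A) (α : ℕ → A) :
    ∃! h : Term τ → A,
      IsAlgHom (downOp (initData τ)) FA h ∧ ∀ i : ℕ, h (Term.e i) = α i := by
  refine ⟨fun t => t.eval FA α, ⟨?_, fun i => rfl⟩, ?_⟩
  · intro f s
    show Term.eval FA ((Term.app f Term.e).subst s) α = _
    rw [Term.eval_subst]
    rfl
  · rintro h ⟨hhom, he⟩
    funext t
    induction t with
    | e i => exact he i
    | app f s ih =>
        have := hhom f s
        simp only [downOp, initData] at this
        have hs : (Term.app f Term.e).subst s = Term.app f s := by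
          simp [Term.subst]
        rw [hs] at this
        rw [this]
        show _ = FA f fun i => Term.eval FA (s i) α
        exact congrArg _ (funext ih)
end

section
/- If C is a minimal infinitary clone τ-algebra (i.e., C has no proper subalgebra), then C↓↑ is isomorphic to C as infinitary clone τ-algebras, where C↓↑ denotes the term infinitary clone τ-algebra of the τ-algebra C↓. -/
/-! ### Statement 6 -/

theorem stmt6 (τ C : Type) (d : CloneData τ C) (hC : IsCloneAlg d)
    (hmin : ∀ S : Set C, IsCloneSubuniv d S → S = Set.univ) :
    ∃ φ : C → ((ℕ → C) → C),
      Function.Injective φ ∧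
      IsCloneHom d (fullCloneData C (downOp d)) φ ∧
      Set.range φ = {g : (ℕ → C) → C | ∃ t : Term τ, g = Term.eval (downOp d) t} := by
  obtain ⟨hN1, hN2, hN3⟩ := hC
  refine ⟨fun a => d.q a, ?_, ?_, ?_⟩
  · intro a b hab
    have h2 := congrFun hab d.e
    change d.q a d.e = d.q b d.e at h2
    rwa [hN2, hN2] at h2
  · refine ⟨fun i => funext fun s => hN1 i s, fun f => rfl, fun x s => funext fun u => ?_⟩
    exact hN3 x s u
  · apply Set.eq_of_subset_of_subset
    · rintro g ⟨a, rfl⟩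
      have hsub : IsCloneSubuniv d {a | ∃ t : Term τ, d.q a = Term.eval (downOp d) t} := by
        refine ⟨fun i => ⟨Term.e i, funext fun s => hN1 i s⟩,
          fun f => ⟨Term.app f Term.e, funext fun s => ?_⟩,
          fun a s ⟨t, ht⟩ hs => ?_⟩
        · show d.q (d.F f) s = downOp d f fun i => s i
          rfl
        · choose ts hts using hs
          refine ⟨t.subst ts, funext fun u => ?_⟩
          rw [Term.eval_subst]
          have h3 := hN3 a s u
          rw [h3]
          have : (fun i => d.q (s i) u) = (fun i => Term.eval (downOp d) (ts i) u) := by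
            funext i; rw [hts i]
          rw [this, ht]
      have := hmin _ hsub
      have ha : a ∈ {a | ∃ t : Term τ, d.q a = Term.eval (downOp d) t} := by
        rw [this]; trivial
      exact ha
    · rintro g ⟨t, rfl⟩
      induction t with
      | e i => exact ⟨d.e i, funext fun s => hN1 i s⟩
      | app f t ih =>
        choose a ha using ih
        refine ⟨d.q (d.F f) a, funext fun s => ?_⟩
        show d.q (d.q (d.F f) a) s = _
        rw [hN3]
        show downOp d f (fun i => d.q (a i) s) = _
        simp only [Term.eval]
        congr 1
        funext i
        exact congrFun (ha i) s
end

section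
/- If K is a variety of τ-algebras, then K△ is a variety of infinitary clone τ-algebras (closed under homomorphic images, subalgebras, and products). -/
/-! ### Auxiliary lemmas for Statement 8 -/

/-- A clone homomorphism is an algebra homomorphism between the induced `↓`-algebras. -/
theorem down_hom {τ C D : Type} (dC : CloneData τ C) (dD : CloneData τ D)
    (α : C → D) (h : IsCloneHom dC dD α) : IsAlgHom (downOp dC) (downOp dD) α := by
  intro f s
  show α (dC.q (dC.F f) s) = _
  rw [h.2.2, h.2.1]
  rfl

/-- If `C ∈ K△` then `C↓ ∈ K` (it embeds in a power of the value algebra). -/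
theorem down_mem {τ : Type} (K : Alg τ → Prop) (hK : IsVariety K) (C : CAlg τ)
    (hC : Tri K C) : K ⟨C.carrier, downOp C.data⟩ := by
  obtain ⟨A, hA, α, hinj, hhom⟩ := hC
  have hP : K (powAlg A (ℕ → A.carrier)) := hK.2.2 _ _ (fun _ => hA)
  refine hK.2.1 _ _ hP ⟨α, hinj, ?_⟩
  intro f s
  show α (C.data.q (C.data.F f) s) = _
  rw [hhom.2.2, hhom.2.1]
  rfl

/-- Cayley-style embedding: if `D↓ ∈ K` then `D ∈ K△`. -/
theorem cayley {τ : Type} (K : Alg τ → Prop) (D : CAlg τ)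
    (hD : K ⟨D.carrier, downOp D.data⟩) : Tri K D := by
  refine ⟨⟨D.carrier, downOp D.data⟩, hD, fun x => D.data.q x, ?_, ?_, ?_, ?_⟩
  · intro x y h
    have : D.data.q x D.data.e = D.data.q y D.data.e := congrFun h D.data.e
    rwa [D.isClone.2.1, D.isClone.2.1] at this
  · intro i; funext s; exact D.isClone.1 i s
  · intro f; rfl
  · intro x s; funext t; exact D.isClone.2.2 x s t

/-! ### Statement 8 -/

theorem stmt8 (τ : Type) (K : Alg τ → Prop) (hK : IsVariety K) :
    IsCloneVariety (Tri K) := by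
  refine ⟨?_, ?_, ?_⟩
  · rintro C D hC ⟨γ, hsurj, hhom⟩
    exact cayley K D
      (hK.1 ⟨C.carrier, downOp C.data⟩ _ (down_mem K hK C hC)
        ⟨γ, hsurj, down_hom _ _ γ hhom⟩)
  · rintro C D hC ⟨γ, hinj, hhom⟩
    exact cayley K D
      (hK.2.1 ⟨C.carrier, downOp C.data⟩ _ (down_mem K hK C hC)
        ⟨γ, hinj, down_hom _ _ γ hhom⟩)
  · intro I Cs hCs
    apply cayley
    exact hK.2.2 I (fun i => ⟨(Cs i).carrier, downOp (Cs i).data⟩)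
      (fun i => down_mem K hK (Cs i) (hCs i))
end

section
/- Let α : A → B be a surjective homomorphism of τ-algebras and let α^ω : A^ω → B^ω be the componentwise map. Then: (1) for every φ : A^ω → A, if there exists ψ : B^ω → B with ψ ∘ α^ω = α ∘ φ, then ψ is unique (denote it α*(φ)); (2) the set C of all φ ∈ O^(ω)_A for which such a ψ exists is the universe of a subalgebra of the full functional infinitary clone τ-algebra O^(ω)_A; (3) the map α* : C → O^(ω)_B is a surjective homomorphism of infinitary clone τ-algebras onto O^(ω)_B. -/
/-! ### Statement 9 -/

theorem star_closed {τ A B : Type} (FA : τ → (ℕ → A) → A) (FB : τ → (ℕ → B) → B)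
    (α : A → B) (hhom : IsAlgHom FA FB α) :
    IsCloneSubuniv (fullCloneData A FA)
      {φ : (ℕ → A) → A |
        ∃ ψ : (ℕ → B) → B, ψ ∘ (fun (s : ℕ → A) (i : ℕ) => α (s i)) = α ∘ φ} := by
  refine ⟨fun i => ⟨fun s => s i, rfl⟩, fun f => ⟨FB f, ?_⟩, ?_⟩
  · funext s
    exact (hhom f s).symm
  · rintro a s ⟨ψa, ha⟩ hs
    choose ψ hψ using hs
    refine ⟨fun t => ψa (fun i => ψ i t), ?_⟩
    funext t
    have h1 : (fun i => ψ i (fun j => α (t j))) = fun i => α (s i t) :=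
      funext fun i => congrFun (hψ i) t
    have h2 := congrFun ha (fun i => s i t)
    simp only [Function.comp_apply] at h2 ⊢
    rw [h1]
    exact h2

theorem stmt9 (τ A B : Type) (FA : τ → (ℕ → A) → A) (FB : τ → (ℕ → B) → B)
    (α : A → B) (hsurj : Function.Surjective α) (hhom : IsAlgHom FA FB α) :
    (∀ (φ : (ℕ → A) → A) (ψ ψ' : (ℕ → B) → B),
        ψ ∘ (fun (s : ℕ → A) (i : ℕ) => α (s i)) = α ∘ φ →
        ψ' ∘ (fun (s : ℕ → A) (i : ℕ) => α (s i)) = α ∘ φ → ψ = ψ') ∧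
    IsCloneSubuniv (fullCloneData A FA)
      {φ : (ℕ → A) → A |
        ∃ ψ : (ℕ → B) → B, ψ ∘ (fun (s : ℕ → A) (i : ℕ) => α (s i)) = α ∘ φ} ∧
    ∃ β : ↥{φ : (ℕ → A) → A |
        ∃ ψ : (ℕ → B) → B, ψ ∘ (fun (s : ℕ → A) (i : ℕ) => α (s i)) = α ∘ φ} →
        ((ℕ → B) → B),
      (∀ φ, (β φ) ∘ (fun (s : ℕ → A) (i : ℕ) => α (s i)) = α ∘ φ.1) ∧
      Function.Surjective β ∧
      IsCloneHom (subCloneData (fullCloneData A FA) (star_closed FA FB α hhom))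
        (fullCloneData B FB) β := by
  have uniq : ∀ (φ : (ℕ → A) → A) (ψ ψ' : (ℕ → B) → B),
      ψ ∘ (fun (s : ℕ → A) (i : ℕ) => α (s i)) = α ∘ φ →
      ψ' ∘ (fun (s : ℕ → A) (i : ℕ) => α (s i)) = α ∘ φ → ψ = ψ' := by
    intro φ ψ ψ' h h'
    funext t
    obtain ⟨s, hs⟩ : ∃ s : ℕ → A, (fun i => α (s i)) = t := by
      choose g hg using fun i => hsurj (t i)
      exact ⟨g, funext hg⟩
    have := (congrFun h s).trans (congrFun h' s).symm
    simpa [hs] using this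
  refine ⟨uniq, star_closed FA FB α hhom, fun φ => φ.2.choose, fun φ => φ.2.choose_spec, ?_, ?_, ?_, ?_⟩
  · intro ψ
    obtain ⟨g, hg⟩ := hsurj.hasRightInverse
    have hψ : ψ ∘ (fun (s : ℕ → A) (i : ℕ) => α (s i)) =
        α ∘ (fun s => g (ψ (fun i => α (s i)))) := by
      funext s; simp [Function.comp, hg _]
    refine ⟨⟨_, ψ, hψ⟩, ?_⟩
    exact uniq _ _ _
      ((⟨_, ψ, hψ⟩ : ↥{φ : (ℕ → A) → A |
        ∃ ψ : (ℕ → B) → B, ψ ∘ (fun (s : ℕ → A) (i : ℕ) => α (s i)) = α ∘ φ}).2.choose_spec) hψ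
  · intro i
    exact uniq _ _ _
      ((subCloneData (fullCloneData A FA) (star_closed FA FB α hhom)).e i).2.choose_spec rfl
  · intro f
    refine uniq _ _ _
      ((subCloneData (fullCloneData A FA) (star_closed FA FB α hhom)).F f).2.choose_spec ?_
    funext s; exact (hhom f s).symm
  · intro x s
    refine uniq _ _ _
      ((subCloneData (fullCloneData A FA) (star_closed FA FB α hhom)).q x s).2.choose_spec ?_
    funext t
    have hx := congrFun x.2.choose_spec (fun i => (s i).1 t)
    have hs : ∀ i, (s i).2.choose (fun j => α (t j)) = α ((s i).1 t) :=
      fun i => congrFun (s i).2.choose_spec t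
    simp only [Function.comp_apply] at hx ⊢
    simp only [fullCloneData, subCloneData]
    rw [show (fun i => (s i).2.choose (fun j => α (t j))) = fun i => α ((s i).1 t) from funext hs]
    exact hx
end

section
/- If H is a variety of infinitary clone τ-algebras, then H▽ is a variety of τ-algebras (closed under homomorphic images, subalgebras, and products). -/
/-! ### Statement 10 -/

section Aux

variable {τ : Type}

theorem fullClone_isClone {A : Type} (FA : τ → (ℕ → A) → A) :
    IsCloneAlg (fullCloneData A FA) :=
  ⟨fun _ _ => rfl, fun _ => rfl, fun _ _ _ => rfl⟩

theorem sub_isClone {C : Type} {d : CloneData τ C} (hd : IsCloneAlg d)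
    {S : Set C} (h : IsCloneSubuniv d S) : IsCloneAlg (subCloneData d h) := by
  refine ⟨fun i s => ?_, fun x => ?_, fun x y z => ?_⟩
  · exact Subtype.ext (hd.1 i fun n => (s n).1)
  · exact Subtype.ext (hd.2.1 x.1)
  · exact Subtype.ext (hd.2.2 x.1 _ _)

theorem subval_hom {C : Type} (d : CloneData τ C) {S : Set C} (h : IsCloneSubuniv d S) :
    IsCloneHom (subCloneData d h) d Subtype.val :=
  ⟨fun _ => rfl, fun _ => rfl, fun _ _ => rfl⟩

/-- Weak form of `Nabla`: some member of `H` admits a (not necessarily injective)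
clone homomorphism into the full functional clone on `A`. -/
def NablaF (H : CAlg τ → Prop) (A : Alg τ) : Prop :=
  ∃ D : CAlg τ, H D ∧ ∃ θ : D.carrier → ((ℕ → A.carrier) → A.carrier),
    IsCloneHom D.data (fullCloneData A.carrier A.op) θ

theorem nabla_of_nablaF {H : CAlg τ → Prop} (hH : IsCloneVariety H) {A : Alg τ}
    (h : NablaF H A) : Nabla H A := by
  obtain ⟨D, hD, θ, hθ⟩ := h
  have hS : IsCloneSubuniv (fullCloneData A.carrier A.op) (Set.range θ) := by
    refine ⟨fun i => ⟨D.data.e i, hθ.1 i⟩, fun f => ⟨D.data.F f, hθ.2.1 f⟩, ?_⟩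
    rintro a s ⟨x, rfl⟩ hs
    choose y hy using hs
    refine ⟨D.data.q x y, ?_⟩
    rw [hθ.2.2]
    congr 1
    funext i
    rw [hy]
  refine ⟨A, ⟨id, Function.bijective_id, fun f s => rfl⟩,
    ⟨_, subCloneData _ hS, sub_isClone (fullClone_isClone A.op) hS⟩, ?_, Subtype.val,
    Subtype.val_injective, subval_hom _ hS⟩
  refine hH.1 D _ hD ⟨fun d => ⟨θ d, Set.mem_range_self d⟩, ?_, ?_, ?_, ?_⟩
  · rintro ⟨g, x, rfl⟩; exact ⟨x, rfl⟩
  · intro i; exact Subtype.ext (hθ.1 i)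
  · intro f; exact Subtype.ext (hθ.2.1 f)
  · intro x s; exact Subtype.ext (hθ.2.2 x s)

theorem nablaF_of_nabla {H : CAlg τ → Prop} {B : Alg τ} (h : Nabla H B) : NablaF H B := by
  obtain ⟨A, ⟨α, hα, hhom⟩, D, hD, β, -, hβ⟩ := h
  let ε := Equiv.ofBijective α hα
  have hg1 : ∀ a, α (ε.symm a) = a := fun a => ε.apply_symm_apply a
  have hg2 : ∀ b, ε.symm (α b) = b := fun b => ε.symm_apply_apply b
  refine ⟨D, hD, fun d s => ε.symm (β d fun i => α (s i)), ?_, ?_, ?_⟩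
  · intro i
    funext s
    show ε.symm (β (D.data.e i) fun n => α (s n)) = s i
    rw [hβ.1 i]
    exact hg2 (s i)
  · intro f
    funext s
    show ε.symm (β (D.data.F f) fun n => α (s n)) = B.op f s
    rw [hβ.2.1 f]
    show ε.symm (A.op f fun i => α (s i)) = B.op f s
    rw [← hhom f s, hg2]
  · intro x t
    funext s
    show ε.symm (β (D.data.q x t) fun n => α (s n)) = _
    rw [hβ.2.2]
    show ε.symm (β x fun i => β (t i) fun j => α (s j)) =
      ε.symm (β x fun i => α (ε.symm (β (t i) fun j => α (s j))))
    exact congrArg (fun v => ε.symm (β x v)) (funext fun i => (hg1 _).symm)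

theorem nablaF_homImage {H : CAlg τ → Prop} (hH : IsCloneVariety H) {A B : Alg τ}
    (h : NablaF H A) (γ : A.carrier → B.carrier) (hγs : Function.Surjective γ)
    (hγ : IsAlgHom A.op B.op γ) : NablaF H B := by
  obtain ⟨D, hD, θ, hθ⟩ := h
  set S : Set D.carrier := {d | ∀ s u : ℕ → A.carrier,
    (∀ i, γ (s i) = γ (u i)) → γ (θ d s) = γ (θ d u)} with hSdef
  have hS : IsCloneSubuniv D.data S := by
    refine ⟨?_, ?_, ?_⟩
    · intro i s u hsu
      rw [hθ.1 i]
      exact hsu i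
    · intro f s u hsu
      rw [hθ.2.1 f]
      show γ (A.op f s) = γ (A.op f u)
      rw [hγ f s, hγ f u]
      congr 1
      funext i
      exact hsu i
    · intro a t ha ht s u hsu
      rw [hθ.2.2 a t]
      show γ (θ a fun i => θ (t i) s) = γ (θ a fun i => θ (t i) u)
      exact ha _ _ fun i => ht i s u hsu
  have hD' : H ⟨S, subCloneData D.data hS, sub_isClone D.isClone hS⟩ :=
    hH.2.1 D _ hD ⟨Subtype.val, Subtype.val_injective, subval_hom D.data hS⟩
  have hσ : ∀ b, γ (Function.surjInv hγs b) = b := Function.rightInverse_surjInv hγs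
  refine ⟨_, hD', fun d s => γ (θ d.1 fun i => Function.surjInv hγs (s i)), ?_, ?_, ?_⟩
  · intro i
    funext s
    show γ (θ (D.data.e i) fun n => Function.surjInv hγs (s n)) = s i
    rw [hθ.1 i]
    exact hσ (s i)
  · intro f
    funext s
    show γ (θ (D.data.F f) fun n => Function.surjInv hγs (s n)) = B.op f s
    rw [hθ.2.1 f]
    show γ (A.op f fun n => Function.surjInv hγs (s n)) = B.op f s
    rw [hγ f]
    congr 1
    funext i
    exact hσ (s i)
  · intro x t
    funext s
    show γ (θ (D.data.q x.1 fun i => (t i).1) fun n => Function.surjInv hγs (s n)) =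
      γ (θ x.1 fun i =>
        Function.surjInv hγs (γ (θ (t i).1 fun n => Function.surjInv hγs (s n))))
    rw [hθ.2.2]
    show γ (θ x.1 fun i => θ (t i).1 fun n => Function.surjInv hγs (s n)) =
      γ (θ x.1 fun i =>
        Function.surjInv hγs (γ (θ (t i).1 fun n => Function.surjInv hγs (s n))))
    exact x.2 _ _ fun i => (hσ _).symm

theorem nablaF_subalg {H : CAlg τ → Prop} (hH : IsCloneVariety H) {A B : Alg τ}
    (h : NablaF H A) (γ : B.carrier → A.carrier) (hγi : Function.Injective γ)
    (hγ : IsAlgHom B.op A.op γ) : NablaF H B := by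
  obtain ⟨D, hD, θ, hθ⟩ := h
  set S : Set D.carrier :=
    {d | ∀ s : ℕ → B.carrier, θ d (fun i => γ (s i)) ∈ Set.range γ} with hSdef
  have hS : IsCloneSubuniv D.data S := by
    refine ⟨?_, ?_, ?_⟩
    · intro i s
      rw [hθ.1 i]
      exact ⟨s i, rfl⟩
    · intro f s
      rw [hθ.2.1 f]
      exact ⟨B.op f s, hγ f s⟩
    · intro a t ha ht s
      rw [hθ.2.2]
      choose u hu using fun i => ht i s
      show θ a (fun i => θ (t i) fun n => γ (s n)) ∈ Set.range γ
      have he : (fun i => θ (t i) fun n => γ (s n)) = fun i => γ (u i) := by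
        funext i
        exact (hu i).symm
      rw [he]
      exact ha u
  have hD' : H ⟨S, subCloneData D.data hS, sub_isClone D.isClone hS⟩ :=
    hH.2.1 D _ hD ⟨Subtype.val, Subtype.val_injective, subval_hom D.data hS⟩
  have key : ∀ (d : S) (s : ℕ → B.carrier), ∃ b, γ b = θ d.1 fun i => γ (s i) :=
    fun d s => d.2 s
  choose θ'' hθ'' using key
  refine ⟨_, hD', θ'', ?_, ?_, ?_⟩
  · intro i
    funext s
    apply hγi
    rw [hθ'']
    show θ (D.data.e i) (fun n => γ (s n)) = γ (s i)
    rw [hθ.1 i]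
    exact rfl
  · intro f
    funext s
    apply hγi
    rw [hθ'']
    show θ (D.data.F f) (fun n => γ (s n)) = γ (B.op f s)
    rw [hθ.2.1 f]
    exact (hγ f s).symm
  · intro x t
    funext s
    apply hγi
    rw [hθ'']
    show θ (D.data.q x.1 fun i => (t i).1) (fun n => γ (s n)) =
      γ (θ'' x fun i => θ'' (t i) s)
    rw [hθ.2.2, hθ'' x]
    show θ x.1 (fun i => θ (t i).1 fun n => γ (s n)) =
      θ x.1 fun i => γ (θ'' (t i) s)
    congr 1
    funext i
    exact (hθ'' (t i) s).symm

theorem nablaF_prod {H : CAlg τ → Prop} (hH : IsCloneVariety H) {I : Type} {A : I → Alg τ}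
    (h : ∀ i, NablaF H (A i)) : NablaF H (prodAlg A) := by
  choose D hD θ hθ using h
  refine ⟨prodCAlg D, hH.2.2 I D hD, fun d s i => θ i (d i) fun n => s n i, ?_, ?_, ?_⟩
  · intro n
    funext s
    funext i
    show θ i ((D i).data.e n) (fun m => s m i) = s n i
    rw [(hθ i).1 n]
    exact rfl
  · intro f
    funext s
    funext i
    show θ i ((D i).data.F f) (fun m => s m i) = (A i).op f fun n => s n i
    rw [(hθ i).2.1 f]
    exact rfl
  · intro x t
    funext s
    funext i
    show θ i ((D i).data.q (x i) fun n => t n i) (fun m => s m i) =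
      θ i (x i) fun n => θ i (t n i) fun m => s m i
    rw [(hθ i).2.2]
    exact rfl

end Aux

theorem stmt10 (τ : Type) (H : CAlg τ → Prop) (hH : IsCloneVariety H) :
    IsVariety (Nabla H) := by
  refine ⟨?_, ?_, ?_⟩
  · rintro A B hA ⟨α, hαs, hαh⟩
    exact nabla_of_nablaF hH (nablaF_homImage hH (nablaF_of_nabla hA) α hαs hαh)
  · rintro A B hA ⟨α, hαi, hαh⟩
    exact nabla_of_nablaF hH (nablaF_subalg hH (nablaF_of_nabla hA) α hαi hαh)
  · intro I As hAs
    exact nabla_of_nablaF hH (nablaF_prod hH fun i => nablaF_of_nabla (hAs i))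
end

section
/- Every variety of τ-algebras is closed under expansion: if K is a variety of τ-algebras and A is a τ-algebra such that for every sequence s ∈ A^ω the subalgebra A_s̄ of A generated by {s_i : i ∈ ω} belongs to K, then A belongs to K. (The proof embeds A into a countably-complete reduced product of the algebras A_s̄.) -/
namespace Stmt11

variable {τ : Type} (A : Alg τ)

theorem subset_gen (X : Set A.carrier) : X ⊆ gen A X :=
  fun _ ha => Set.mem_sInter.2 fun _ hS => hS.2 ha

theorem gen_mono {X Y : Set A.carrier} (hXY : X ⊆ Y) : gen A X ⊆ gen A Y :=
  fun _ ha => Set.mem_sInter.2 fun S hS => Set.mem_sInter.1 ha S ⟨hS.1, hXY.trans hS.2⟩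

/-- Combine countably many sequences into one whose range contains all of them. -/
def comb (t : ℕ → ℕ → A.carrier) : ℕ → A.carrier :=
  fun m => t m.unpair.1 m.unpair.2

theorem range_le_comb (t : ℕ → ℕ → A.carrier) (n : ℕ) :
    Set.range (t n) ⊆ Set.range (comb A t) := by
  rintro _ ⟨k, rfl⟩
  exact ⟨Nat.pair n k, by simp [comb]⟩

/-- The product of all countably generated subalgebras. -/
def P : Alg τ := prodAlg (fun s : ℕ → A.carrier => genSubalg A (Set.range s))

/-- `x` is eventually constant with value `a`. -/
def Ev (x : ∀ s : ℕ → A.carrier, ↥(gen A (Set.range s))) (a : A.carrier) : Prop :=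
  ∃ t : ℕ → A.carrier, ∀ u : ℕ → A.carrier, Set.range t ⊆ Set.range u → (x u : A.carrier) = a

theorem ev_unique {x : ∀ s : ℕ → A.carrier, ↥(gen A (Set.range s))} {a b : A.carrier}
    (ha : Ev A x a) (hb : Ev A x b) : a = b := by
  obtain ⟨t, ht⟩ := ha
  obtain ⟨t', ht'⟩ := hb
  set T := comb A (fun n => if n = 0 then t else t') with hT
  have h1 : Set.range t ⊆ Set.range T := by
    have := range_le_comb A (fun n => if n = 0 then t else t') 0
    simpa using this
  have h2 : Set.range t' ⊆ Set.range T := by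
    have := range_le_comb A (fun n => if n = 0 then t else t') 1
    simpa using this
  rw [← ht T h1, ht' T h2]

theorem ev_op {x : ℕ → ∀ s : ℕ → A.carrier, ↥(gen A (Set.range s))} {a : ℕ → A.carrier}
    (hx : ∀ n, Ev A (x n) (a n)) (f : τ) :
    Ev A ((P A).op f x) (A.op f a) := by
  choose t ht using hx
  refine ⟨comb A t, fun u hu => ?_⟩
  show (A.op f (fun n => (x n u : A.carrier)) : A.carrier) = A.op f a
  congr 1
  funext n
  exact ht n u ((range_le_comb A t n).trans hu)

/-- The set of eventually constant elements of the product. -/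
def S : Set ((P A).carrier) := {x | ∃ a, Ev A x a}

theorem S_subuniv : IsSubuniv (P A) (S A) := by
  intro f x hx
  choose a ha using hx
  exact ⟨A.op f a, ev_op A ha f⟩

open Classical in
/-- For `a : A`, the tuple which is `a` wherever possible. -/
noncomputable def xa (a : A.carrier) : ∀ s : ℕ → A.carrier, ↥(gen A (Set.range s)) :=
  fun s => if hmem : a ∈ gen A (Set.range s) then ⟨a, hmem⟩
    else ⟨s 0, subset_gen A _ ⟨0, rfl⟩⟩

theorem ev_xa (a : A.carrier) : Ev A (xa A a) a := by
  refine ⟨fun _ => a, fun u hu => ?_⟩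
  have hmem : a ∈ gen A (Set.range u) := subset_gen A _ (hu ⟨0, rfl⟩)
  simp only [xa, dif_pos hmem]

/-- The limit map from the subalgebra of eventually constant tuples onto `A`. -/
noncomputable def lim (x : ↥(S A)) : A.carrier := x.2.choose

theorem ev_lim (x : ↥(S A)) : Ev A x.1 (lim A x) := x.2.choose_spec

theorem lim_surj : Function.Surjective (lim A) := by
  intro a
  refine ⟨⟨xa A a, a, ev_xa A a⟩, ?_⟩
  exact ev_unique A (ev_lim A _) (ev_xa A a)

theorem lim_hom : IsAlgHom (subAlg (P A) (S A) (S_subuniv A)).op A.op (lim A) := by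
  intro f x
  refine ev_unique A (ev_lim A _) ?_
  exact ev_op A (fun n => ev_lim A (x n)) f

end Stmt11

/-! ### Statement 11 -/

theorem stmt11 (τ : Type) (K : Alg τ → Prop) (hK : IsVariety K) (A : Alg τ)
    (h : ∀ s : ℕ → A.carrier, K (genSubalg A (Set.range s))) : K A := by
  have hP : K (Stmt11.P A) := hK.2.2 _ _ h
  have hS : K (subAlg (Stmt11.P A) (Stmt11.S A) (Stmt11.S_subuniv A)) :=
    hK.2.1 _ _ hP ⟨Subtype.val, Subtype.val_injective, fun f s => rfl⟩
  exact hK.1 _ _ hS ⟨Stmt11.lim A, Stmt11.lim_surj A, Stmt11.lim_hom A⟩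
end

section
/- Let K be a variety of τ-algebras all of whose members are finite-dimensional, and let A be a finite-dimensional τ-algebra such that for every s ∈ A^ω with {s_i : i ∈ ω} finite, the subalgebra A_s̄ of A generated by {s_i : i ∈ ω} belongs to K. Then A belongs to K. -/
/- A is the direct union of its finitely generated subalgebras A_s̄. Elements of the product
of all A_s̄ that are eventually constant along this directed system form a subalgebra, because
each basic operation only reads finitely many arguments, and sending such an element to its
eventual value is a surjective homomorphism onto A. Hence A ∈ HSP(K) = K. -/

open Filter

theorem subset_gen {τ : Type} (A : Alg τ) (X : Set A.carrier) : X ⊆ gen A X :=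
  fun _ ha => Set.mem_sInter.2 fun _ hS => hS.2 ha

theorem gen_mono {τ : Type} (A : Alg τ) {X Y : Set A.carrier} (h : X ⊆ Y) :
    gen A X ⊆ gen A Y :=
  fun _ ha => Set.mem_sInter.1 ha _ ⟨gen_subuniv A Y, h.trans (subset_gen A Y)⟩

theorem FinDimAlg.finDimOp_op {τ : Type} {A : Alg τ} (hA : FinDimAlg A) (f : τ) :
    FinDimOp (A.op f) :=
  hA (.app f .e)

theorem FinDimOp.eventually_apply_eq {A ι : Type} {g : (ℕ → A) → A} (hg : FinDimOp g)
    {l : Filter ι} {y : ι → ℕ → A} {a : ℕ → A} (hy : ∀ i, ∀ᶠ j in l, y j i = a i) :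
    ∀ᶠ j in l, g (y j) = g a := by
  obtain ⟨n, hn⟩ := hg
  have hlt : ∀ᶠ j in l, ∀ i ∈ Set.Iio n, y j i = a i :=
    (eventually_all_finite (Set.finite_Iio n)).2 fun i _ => hy i
  exact hlt.mono fun j hj => hn _ _ fun i hi => hj i hi

section DirectedCover

variable {τ : Type} (A : Alg τ) {J : Type} [Preorder J] (B : J → Set A.carrier)
  (hB : ∀ j, IsSubuniv A (B j))

abbrev coverProd : Alg τ :=
  prodAlg fun j => subAlg A (B j) (hB j)

def eventuallyConstSet : Set (coverProd A B hB).carrier :=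
  {x | ∃ a, ∀ᶠ j in atTop, (x j).1 = a}

theorem isSubuniv_eventuallyConstSet (hA : ∀ f, FinDimOp (A.op f)) :
    IsSubuniv (coverProd A B hB) (eventuallyConstSet A B hB) := by
  intro f x hx
  choose a ha using hx
  exact ⟨A.op f a, (hA f).eventually_apply_eq ha⟩

theorem exists_surjective_hom_of_directed_cover [IsDirectedOrder J]
    (hA : ∀ f, FinDimOp (A.op f)) (hmono : Monotone B) (hne : ∀ j, (B j).Nonempty)
    (hcover : ∀ a, ∃ j, a ∈ B j) :
    ∃ (S : Set (coverProd A B hB).carrier) (hS : IsSubuniv (coverProd A B hB) S)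
      (α : (subAlg _ S hS).carrier → A.carrier),
      Function.Surjective α ∧ IsAlgHom (subAlg _ S hS).op A.op α := by
  classical
  have eventual_value_unique : ∀ {y : J → A.carrier} {a b : A.carrier},
      (∀ᶠ j in atTop, y j = a) → (∀ᶠ j in atTop, y j = b) → a = b := by
    intro y a b ha hb
    have : Nonempty J := ⟨(hcover a).choose⟩
    obtain ⟨j, hja, hjb⟩ := (ha.and hb).exists
    exact hja.symm.trans hjb
  refine ⟨eventuallyConstSet A B hB, isSubuniv_eventuallyConstSet A B hB hA,
    fun x => x.2.choose, ?_, ?_⟩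
  · intro a
    obtain ⟨j₀, hj₀⟩ := hcover a
    let x : (coverProd A B hB).carrier := fun j =>
      if h : a ∈ B j then ⟨a, h⟩ else ⟨(hne j).some, (hne j).some_mem⟩
    have hx : ∀ᶠ j in atTop, (x j).1 = a :=
      (eventually_ge_atTop j₀).mono fun j hj => by simp [x, hmono hj hj₀]
    have hxS : x ∈ eventuallyConstSet A B hB := ⟨a, hx⟩
    exact ⟨⟨x, hxS⟩, eventual_value_unique hxS.choose_spec hx⟩
  · intro f x
    exact eventual_value_unique ((subAlg _ _ _).op f x).2.choose_spec
      ((hA f).eventually_apply_eq fun i => (x i).2.choose_spec)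

theorem IsVariety.mem_of_directed_cover {K : Alg τ → Prop} (hK : IsVariety K)
    [IsDirectedOrder J] (hA : ∀ f, FinDimOp (A.op f)) (hmono : Monotone B)
    (hne : ∀ j, (B j).Nonempty) (hcover : ∀ a, ∃ j, a ∈ B j)
    (hKB : ∀ j, K (subAlg A (B j) (hB j))) : K A := by
  obtain ⟨S, hS, α, hsurj, hhom⟩ :=
    exists_surjective_hom_of_directed_cover A B hB hA hmono hne hcover
  have hprod : K (coverProd A B hB) := hK.2.2 J _ hKB
  have hsub : K (subAlg _ S hS) :=
    hK.2.1 _ _ hprod ⟨Subtype.val, Subtype.val_injective, fun _ _ => rfl⟩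
  exact hK.1 _ A hsub ⟨α, hsurj, hhom⟩

end DirectedCover

theorem stmt12_general (τ : Type) (K : Alg τ → Prop) (hK : IsVariety K)
    (A : Alg τ) (hA : FinDimAlg A)
    (h : ∀ s : ℕ → A.carrier, (Set.range s).Finite → K (genSubalg A (Set.range s))) :
    K A := by
  let J := {s : ℕ → A.carrier // (Set.range s).Finite}
  let _ : Preorder J := Preorder.lift fun s => gen A (Set.range s.1)
  have : IsDirectedOrder J := ⟨fun s t => by
    obtain ⟨u, hu⟩ := (s.2.union t.2).countable.exists_eq_range
      ((Set.range_nonempty s.1).mono Set.subset_union_left)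
    exact ⟨⟨u, hu ▸ s.2.union t.2⟩, gen_mono A (hu ▸ Set.subset_union_left),
      gen_mono A (hu ▸ Set.subset_union_right)⟩⟩
  exact hK.mem_of_directed_cover A (fun s : J => gen A (Set.range s.1))
    (fun _ => gen_subuniv _ _) hA.finDimOp_op (fun _ _ h => h)
    (fun s => ⟨s.1 0, subset_gen A _ ⟨0, rfl⟩⟩)
    (fun a => ⟨⟨fun _ => a, (Set.finite_singleton a).subset Set.range_const_subset⟩,
      subset_gen A _ ⟨0, rfl⟩⟩)
    (fun s => h s.1 s.2)

theorem stmt12 (τ : Type) (K : Alg τ → Prop) (hK : IsVariety K)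
    (hfd : ∀ B : Alg τ, K B → FinDimAlg B)
    (A : Alg τ) (hA : FinDimAlg A)
    (h : ∀ s : ℕ → A.carrier, (Set.range s).Finite → K (genSubalg A (Set.range s))) :
    K A :=
  stmt12_general τ K hK A hA h
end

section
/- Let K be a variety of τ-algebras, and let N_K := N_τ̄ / Th(K) be the quotient of the initial infinitary clone τ-algebra N_τ̄ by the congruence Th(K). Then the τ-algebra N_K↓ belongs to K and is the free K-algebra over the generating set {e_0/Th(K), e_1/Th(K), …}: for every B ∈ K and every assignment of the generators into B, there is a unique τ-algebra homomorphism N_K↓ → B extending it. -/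
/-! ### Statement 15 -/

def thRel {τ : Type} (K : Alg τ → Prop) : Setoid (Term τ) where
  r t u := ∀ A : Alg τ, K A → Term.eval A.op t = Term.eval A.op u
  iseqv := ⟨fun _ _ _ => rfl, fun h A hA => (h A hA).symm,
    fun h1 h2 A hA => (h1 A hA).trans (h2 A hA)⟩

/-- The τ-algebra `N_K↓` on the quotient of the terms by `Th(K)`. -/
noncomputable def NKalg {τ : Type} (K : Alg τ → Prop) : Alg τ :=
  ⟨Quotient (thRel K),
    fun f s => Quotient.mk (thRel K) (Term.app f (fun i => (s i).out))⟩

/-!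
The identities of `K` are exactly the pairs of terms that no assignment in an algebra of `K`
separates, so `N_K↓` is a subdirect product of members of `K`: one factor for every pair of
distinct classes. Freeness follows because every class `t/Th(K)` is the value of the term `t`
at the generators, and term values are preserved by homomorphisms.
-/

theorem IsAlgHom.eval {τ A B : Type} {FA : τ → (ℕ → A) → A} {FB : τ → (ℕ → B) → B}
    {φ : A → B} (hφ : IsAlgHom FA FB φ) (s : ℕ → A) :
    ∀ t : Term τ, φ (t.eval FA s) = t.eval FB (fun i => φ (s i))
  | .e _ => rfl
  | .app f t => by
      simp only [Term.eval, hφ f, IsAlgHom.eval hφ s (t _)]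

theorem IsAlgHom.pi {τ I : Type} {A : Alg τ} {B : I → Alg τ}
    {φ : ∀ i, A.carrier → (B i).carrier} (hφ : ∀ i, IsAlgHom A.op (B i).op (φ i)) :
    IsAlgHom A.op (prodAlg B).op (fun a i => φ i a) := by
  intro f s
  funext i
  exact hφ i f s

theorem IsVariety.mem_of_separating {τ : Type} {K : Alg τ → Prop} (hK : IsVariety K)
    (A : Alg τ)
    (hsep : ∀ x y : A.carrier, x ≠ y → ∃ B : Alg τ, K B ∧
      ∃ φ : A.carrier → B.carrier, IsAlgHom A.op B.op φ ∧ φ x ≠ φ y) :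
    K A := by
  choose B hB φ hφ hne using fun p : {p : A.carrier × A.carrier // p.1 ≠ p.2} =>
    hsep p.1.1 p.1.2 p.2
  refine hK.2.1 (prodAlg B) A (hK.2.2 _ B hB) ⟨fun a p => φ p a, ?_, IsAlgHom.pi hφ⟩
  intro x y hxy
  by_contra hne'
  exact hne ⟨(x, y), hne'⟩ (congrFun hxy ⟨(x, y), hne'⟩)

theorem thRel_app {τ : Type} (K : Alg τ → Prop) (f : τ) {t u : ℕ → Term τ}
    (h : ∀ i, thRel K (t i) (u i)) : thRel K (Term.app f t) (Term.app f u) := by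
  intro A hA
  funext s
  exact congrArg (A.op f) (funext fun i => congrFun (h i A hA) s)

namespace NKalg

variable {τ : Type} (K : Alg τ → Prop)

theorem op_mk (f : τ) (t : ℕ → Term τ) :
    (NKalg K).op f (fun i => Quotient.mk (thRel K) (t i)) = Quotient.mk (thRel K) (.app f t) :=
  Quotient.sound (thRel_app K f fun i => Quotient.mk_out (t i))

theorem mk_eq_eval : ∀ t : Term τ,
    Quotient.mk (thRel K) t = t.eval (NKalg K).op (fun i => Quotient.mk (thRel K) (.e i))
  | .e _ => rfl
  | .app f t => by
      simp only [Term.eval, ← mk_eq_eval (t _), op_mk]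

theorem apply_mk_of_isAlgHom {B : Alg τ} {φ : (NKalg K).carrier → B.carrier}
    (hφ : IsAlgHom (NKalg K).op B.op φ) (t : Term τ) :
    φ (Quotient.mk (thRel K) t) = t.eval B.op (fun i => φ (Quotient.mk (thRel K) (.e i))) :=
  (congrArg φ (mk_eq_eval K t)).trans (hφ.eval _ t)

variable {K}

def lift {B : Alg τ} (hB : K B) (α : ℕ → B.carrier) : (NKalg K).carrier → B.carrier :=
  Quotient.lift (fun t => t.eval B.op α) fun _ _ h => congrFun (h B hB) α

theorem lift_mk {B : Alg τ} (hB : K B) (α : ℕ → B.carrier) (t : Term τ) :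
    lift hB α (Quotient.mk (thRel K) t) = t.eval B.op α :=
  rfl

theorem isAlgHom_lift {B : Alg τ} (hB : K B) (α : ℕ → B.carrier) :
    IsAlgHom (NKalg K).op B.op (lift hB α) := by
  intro f s
  conv_lhs => rw [← funext fun i => Quotient.out_eq (s i), op_mk]
  conv_rhs => rw [← funext fun i => Quotient.out_eq (s i)]
  rfl

theorem eq_lift {B : Alg τ} (hB : K B) (α : ℕ → B.carrier) {φ : (NKalg K).carrier → B.carrier}
    (hφ : IsAlgHom (NKalg K).op B.op φ) (hα : ∀ i, φ (Quotient.mk (thRel K) (.e i)) = α i) :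
    φ = lift hB α := by
  funext x
  induction x using Quotient.ind with
  | _ t => rw [apply_mk_of_isAlgHom K hφ, funext hα, lift_mk]

theorem mem (hK : IsVariety K) : K (NKalg K) := by
  refine hK.mem_of_separating _ fun x y hxy => ?_
  induction x using Quotient.ind with | _ t =>
  induction y using Quotient.ind with | _ u =>
  obtain ⟨A, hA, hne⟩ : ∃ A : Alg τ, K A ∧ t.eval A.op ≠ u.eval A.op := by
    by_contra! h
    exact hxy (Quotient.sound h)
  obtain ⟨s, hs⟩ := Function.ne_iff.1 hne
  exact ⟨A, hA, lift hA s, isAlgHom_lift hA s, hs⟩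

end NKalg

theorem stmt15 (τ : Type) (K : Alg τ → Prop) (hK : IsVariety K) :
    K (NKalg K) ∧
    ∀ B : Alg τ, K B → ∀ α : ℕ → B.carrier,
      ∃! h : (NKalg K).carrier → B.carrier,
        IsAlgHom (NKalg K).op B.op h ∧
        ∀ i : ℕ, h (Quotient.mk (thRel K) (Term.e i)) = α i :=
  ⟨NKalg.mem hK, fun _ hB α => ⟨NKalg.lift hB α, ⟨NKalg.isAlgHom_lift hB α, fun _ => rfl⟩,
    fun _ ⟨hφ, hα⟩ => NKalg.eq_lift hB α hφ hα⟩⟩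
end
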